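/- arXiv:2306.15944 — 7 statements merged into one kernel-verified Lean document; each statement's English description precedes it below -/
import Mathlib

section
/- Let b₁, b₂ ≥ 1 be integers and for an integer b ≥ 1 write c_b = 1/2^b and P_b(J) = c_b + (1 − c_b)·J. Define f(J) = P_{b₁+b₂}(J) − P_{b₁}(J)·P_{b₂}(J). Then f(J) ≥ 0 for all J ∈ [0, 1]. -/
/-- The chunk-covariance function `f(J) = P_{b₁+b₂}(J) − P_{b₁}(J)·P_{b₂}(J)`,
where `P_b(J) = 1/2^b + (1 − 1/2^b)·J`. -/
noncomputable def pbHashCov (b₁ b₂ : ℕ) (J : ℝ) : ℝ :=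
  (1 / 2 ^ (b₁ + b₂) + (1 - 1 / 2 ^ (b₁ + b₂)) * J)
    - (1 / 2 ^ b₁ + (1 - 1 / 2 ^ b₁) * J) * (1 / 2 ^ b₂ + (1 - 1 / 2 ^ b₂) * J)

/-- Nonnegativity part of Lemma 1: `f(J) ≥ 0` for all `J ∈ [0,1]`. -/
theorem pbHashCov_nonneg (b₁ b₂ : ℕ) (hb₁ : 1 ≤ b₁) (hb₂ : 1 ≤ b₂)
    (J : ℝ) (hJ : J ∈ Set.Icc (0 : ℝ) 1) :
    0 ≤ pbHashCov b₁ b₂ J := by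
  obtain ⟨h0, h1⟩ := hJ
  have hc1 : (1 : ℝ) / 2 ^ b₁ ≤ 1 := by
    rw [div_le_one (by positivity)]; exact one_le_pow₀ (by norm_num)
  have hc2 : (1 : ℝ) / 2 ^ b₂ ≤ 1 := by
    rw [div_le_one (by positivity)]; exact one_le_pow₀ (by norm_num)
  have key : pbHashCov b₁ b₂ J
      = (1 - 1 / 2 ^ b₁) * (1 - 1 / 2 ^ b₂) * J * (1 - J) := by
    unfold pbHashCov
    rw [pow_add]
    have h1 : (2 : ℝ) ^ b₁ ≠ 0 := by positivity
    have h2 : (2 : ℝ) ^ b₂ ≠ 0 := by positivity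
    field_simp
    ring
  rw [key]
  have ha := sub_nonneg.mpr hc1
  have hb := sub_nonneg.mpr hc2
  have := sub_nonneg.mpr h1
  exact mul_nonneg (mul_nonneg (mul_nonneg ha hb) h0) this
end

section
/- Let b₁, b₂ ≥ 1 be integers and for an integer b ≥ 1 write c_b = 1/2^b and P_b(J) = c_b + (1 − c_b)·J. Define f(J) = P_{b₁+b₂}(J) − P_{b₁}(J)·P_{b₂}(J). Then for every J ∈ [0, 1], f(J) ≤ (1/4)·(1 − 1/2^{b₁})·(1 − 1/2^{b₂}), and the maximum value (1/4)·(1 − 1/2^{b₁})·(1 − 1/2^{b₂}) is attained at J = 1/2. -/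
lemma pbHashCov_eq (b₁ b₂ : ℕ) (J : ℝ) :
    pbHashCov b₁ b₂ J = (1 - 1 / 2 ^ b₁) * (1 - 1 / 2 ^ b₂) * (J - J ^ 2) := by
  have h1 : (2 : ℝ) ^ b₁ ≠ 0 := by positivity
  have h2 : (2 : ℝ) ^ b₂ ≠ 0 := by positivity
  unfold pbHashCov
  rw [pow_add]
  field_simp
  ring

/-- Maximum-value part of Lemma 1: on `[0,1]`, `f(J) ≤ (1/4)(1 − 1/2^{b₁})(1 − 1/2^{b₂})`,
and this maximum value is attained at `J = 1/2`. -/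
theorem pbHashCov_max (b₁ b₂ : ℕ) (hb₁ : 1 ≤ b₁) (hb₂ : 1 ≤ b₂) :
    (∀ J ∈ Set.Icc (0 : ℝ) 1,
      pbHashCov b₁ b₂ J ≤ (1 / 4) * (1 - 1 / (2 : ℝ) ^ b₁) * (1 - 1 / (2 : ℝ) ^ b₂)) ∧
    pbHashCov b₁ b₂ (1 / 2) = (1 / 4) * (1 - 1 / (2 : ℝ) ^ b₁) * (1 - 1 / (2 : ℝ) ^ b₂) := by
  have hc1 : (1 : ℝ) / 2 ^ b₁ ≤ 1 := by
    rw [div_le_one (by positivity)]; exact one_le_pow₀ (by norm_num)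
  have hc2 : (1 : ℝ) / 2 ^ b₂ ≤ 1 := by
    rw [div_le_one (by positivity)]; exact one_le_pow₀ (by norm_num)
  constructor
  · intro J hJ
    rw [pbHashCov_eq]
    have h : J - J ^ 2 ≤ 1 / 4 := by nlinarith [sq_nonneg (J - 1/2)]
    nlinarith [mul_nonneg (sub_nonneg.2 hc1) (sub_nonneg.2 hc2)]
  · rw [pbHashCov_eq]; ring
end

section
/- Let (Ω, μ) be a probability space, J ∈ [0, 1], m ≥ 1 an integer, and b : Fin m → ℕ with b(i) ≥ 1 for each i. For an integer b ≥ 1 write c_b = 1/2^b and P_b = c_b + (1 − c_b)·J. Let X : Fin m → Ω → ℝ be random variables such that each X(i) takes values in {0, 1}, E[X(i)] = P_{b(i)} for every i, and E[X(i)·X(j)] = P_{b(i)+b(j)} for every i ≠ j. Define the estimator Ĵ_m = (∑_{i} X(i)) / (∑_{i} (1 − c_{b(i)})) − (∑_{i} c_{b(i)}) / (∑_{i} (1 − c_{b(i)})). Then E[Ĵ_m] = J. -/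
open MeasureTheory ProbabilityTheory

/-! By linearity of expectation `E[∑ X i] = ∑ c i + J · ∑ (1 - c i)`, so subtracting `∑ c i` and
dividing by `∑ (1 - c i) > 0` recovers `J`. -/

lemma one_sub_one_div_two_pow_pos {n : ℕ} (hn : 1 ≤ n) : (0 : ℝ) < 1 - 1 / 2 ^ n := by
  have : (1 : ℝ) / 2 ^ n < 1 := by
    rw [div_lt_one (by positivity)]
    exact one_lt_pow₀ one_lt_two (by omega)
  linarith

lemma integrable_of_forall_eq_zero_or_eq_one {Ω : Type*} [MeasurableSpace Ω] {μ : Measure Ω}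
    [IsFiniteMeasure μ] {f : Ω → ℝ} (hf : Measurable f) (h01 : ∀ ω, f ω = 0 ∨ f ω = 1) :
    Integrable f μ :=
  (integrable_const (1 : ℝ)).mono' hf.aestronglyMeasurable <| ae_of_all _ fun ω => by
    rcases h01 ω with h | h <;> simp [h]

theorem integral_sum_div_sub_sum_div_eq {Ω ι : Type*} [MeasurableSpace Ω] [Fintype ι]
    {μ : Measure Ω} [IsProbabilityMeasure μ] {X : ι → Ω → ℝ} {c : ι → ℝ} {J : ℝ}
    (hX : ∀ i, Integrable (X i) μ) (hmean : ∀ i, ∫ ω, X i ω ∂μ = c i + (1 - c i) * J)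
    (hS : ∑ i, (1 - c i) ≠ 0) :
    ∫ ω, ((∑ i, X i ω) / (∑ i, (1 - c i)) - (∑ i, c i) / (∑ i, (1 - c i))) ∂μ = J := by
  have hsum : ∫ ω, ∑ i, X i ω ∂μ = ∑ i, c i + (∑ i, (1 - c i)) * J := by
    rw [integral_finsetSum _ fun i _ => hX i, Finset.sum_mul, ← Finset.sum_add_distrib]
    exact Finset.sum_congr rfl fun i _ => hmean i
  rw [integral_sub ((integrable_finsetSum _ fun i _ => hX i).div_const _) (integrable_const _),
    integral_div, integral_const, hsum, probReal_univ, one_smul, div_sub_div_same,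
    add_sub_cancel_left, mul_div_cancel_left₀ J hS]

theorem pbHash_unbiased_general {Ω : Type*} [MeasurableSpace Ω]
    (μ : Measure Ω) [IsProbabilityMeasure μ]
    (J : ℝ) (m : ℕ) (hm : 1 ≤ m)
    (b : Fin m → ℕ) (hb : ∀ i, 1 ≤ b i)
    (X : Fin m → Ω → ℝ) (hXmeas : ∀ i, Measurable (X i))
    (hX01 : ∀ i ω, X i ω = 0 ∨ X i ω = 1)
    (hXmean : ∀ i, ∫ ω, X i ω ∂μ = 1 / 2 ^ b i + (1 - 1 / 2 ^ b i) * J) :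
    ∫ ω, ((∑ i, X i ω) / (∑ i, (1 - 1 / (2 : ℝ) ^ b i))
        - (∑ i, 1 / (2 : ℝ) ^ b i) / (∑ i, (1 - 1 / (2 : ℝ) ^ b i))) ∂μ = J := by
  have : Nonempty (Fin m) := Fin.pos_iff_nonempty.mp hm
  have hS : 0 < ∑ i, (1 - 1 / (2 : ℝ) ^ b i) :=
    Finset.sum_pos (fun i _ => one_sub_one_div_two_pow_pos (hb i)) Finset.univ_nonempty
  exact integral_sum_div_sub_sum_div_eq
    (fun i => integrable_of_forall_eq_zero_or_eq_one (hXmeas i) (hX01 i)) hXmean hS.ne'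

/-- Unbiasedness of the Pb-Hash estimator (Theorem 2): with `m` chunks of `b i` bits,
`c_b = 1/2^b`, collision indicators `X i` with `E[X i] = P_{b i} = c_{b i} + (1 − c_{b i})·J`
and `E[X i · X j] = P_{b i + b j}` for `i ≠ j`, the estimator
`Ĵ_m = (∑ X i)/(∑ (1 − c_{b i})) − (∑ c_{b i})/(∑ (1 − c_{b i}))` satisfies `E[Ĵ_m] = J`. -/
theorem pbHash_unbiased {Ω : Type*} [MeasurableSpace Ω]
    (μ : Measure Ω) [IsProbabilityMeasure μ]
    (J : ℝ) (hJ : J ∈ Set.Icc (0 : ℝ) 1) (m : ℕ) (hm : 1 ≤ m)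
    (b : Fin m → ℕ) (hb : ∀ i, 1 ≤ b i)
    (X : Fin m → Ω → ℝ) (hXmeas : ∀ i, Measurable (X i))
    (hX01 : ∀ i ω, X i ω = 0 ∨ X i ω = 1)
    (hXmean : ∀ i, ∫ ω, X i ω ∂μ = 1 / 2 ^ b i + (1 - 1 / 2 ^ b i) * J)
    (hXY : ∀ i j, i ≠ j →
      ∫ ω, X i ω * X j ω ∂μ = 1 / 2 ^ (b i + b j) + (1 - 1 / 2 ^ (b i + b j)) * J) :
    ∫ ω, ((∑ i, X i ω) / (∑ i, (1 - 1 / (2 : ℝ) ^ b i))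
        - (∑ i, 1 / (2 : ℝ) ^ b i) / (∑ i, (1 - 1 / (2 : ℝ) ^ b i))) ∂μ = J :=
  pbHash_unbiased_general μ J m hm b hb X hXmeas hX01 hXmean
end

section
/- Let (Ω, μ) be a probability space, J ∈ [0, 1], m ≥ 1 an integer, and b : Fin m → ℕ with b(i) ≥ 1 for each i. For an integer b ≥ 1 write c_b = 1/2^b and P_b = c_b + (1 − c_b)·J. Let X : Fin m → Ω → ℝ be random variables such that each X(i) takes values in {0, 1}, E[X(i)] = P_{b(i)} for every i, and E[X(i)·X(j)] = P_{b(i)+b(j)} for every i ≠ j. Define the estimator Ĵ_m = (∑_{i} X(i) − ∑_{i} c_{b(i)}) / (∑_{i} (1 − c_{b(i)})). Then the variance of Ĵ_m equals [∑_{i} P_{b(i)}(1 − P_{b(i)}) + ∑_{i ≠ j} (P_{b(i)+b(j)} − P_{b(i)}·P_{b(j)})] / (∑_{i} (1 − c_{b(i)}))². -/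
/-!
Scaling and shifting give `Var Ĵ_m = Var (∑ X i) / (∑ (1 - c_{b i}))²`, and `Var (∑ X i)` is the
sum of all covariances `cov (X i, X j)`. On the diagonal these are Bernoulli variances
`P (1 - P)`; off the diagonal they are `E[X i X j] - E[X i] E[X j]`.
-/

open MeasureTheory ProbabilityTheory Finset

lemma Finset.sum_sum_eq_sum_diag_add_sum_offDiag {ι M : Type*} [Fintype ι] [DecidableEq ι]
    [AddCommMonoid M] (f : ι → ι → M) :
    ∑ i, ∑ j, f i j = ∑ i, f i i + ∑ i, ∑ j, if i ≠ j then f i j else 0 := by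
  rw [← sum_add_distrib]
  refine sum_congr rfl fun i _ ↦ ?_
  rw [← Fintype.sum_ite_eq i (f i), ← sum_add_distrib]
  refine sum_congr rfl fun j _ ↦ ?_
  by_cases h : i = j <;> simp [h]

namespace ProbabilityTheory

variable {Ω : Type*} [MeasurableSpace Ω] {μ : Measure Ω}

lemma variance_sub_const_div [IsProbabilityMeasure μ] {Y : Ω → ℝ}
    (hY : AEStronglyMeasurable Y μ) (c d : ℝ) :
    Var[fun ω ↦ (Y ω - c) / d; μ] = Var[Y; μ] / d ^ 2 := by
  simp_rw [div_eq_mul_inv, variance_mul_const, inv_pow, variance_sub_const hY]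

lemma memLp_of_zero_or_one [IsFiniteMeasure μ] {X : Ω → ℝ} (hX : Measurable X)
    (h01 : ∀ ω, X ω = 0 ∨ X ω = 1) (p : ENNReal) : MemLp X p μ :=
  MemLp.of_bound hX.aestronglyMeasurable 1 <| ae_of_all _ fun ω ↦ by
    rcases h01 ω with h | h <;> simp [h]

lemma variance_of_zero_or_one [IsProbabilityMeasure μ] {X : Ω → ℝ} (hX : Measurable X)
    (h01 : ∀ ω, X ω = 0 ∨ X ω = 1) : Var[X; μ] = μ[X] * (1 - μ[X]) := by
  have hsq : X ^ 2 = X := funext fun ω ↦ by rcases h01 ω with h | h <;> simp [h]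
  rw [variance_eq_sub (memLp_of_zero_or_one hX h01 2), hsq]
  ring

end ProbabilityTheory

theorem pbHash_variance_general {Ω : Type*} [MeasurableSpace Ω]
    (μ : Measure Ω) [IsProbabilityMeasure μ]
    (J : ℝ) (m : ℕ)
    (b : Fin m → ℕ)
    (X : Fin m → Ω → ℝ) (hXmeas : ∀ i, Measurable (X i))
    (hX01 : ∀ i ω, X i ω = 0 ∨ X i ω = 1)
    (hXmean : ∀ i, ∫ ω, X i ω ∂μ = 1 / 2 ^ b i + (1 - 1 / 2 ^ b i) * J)
    (hXY : ∀ i j, i ≠ j →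
      ∫ ω, X i ω * X j ω ∂μ = 1 / 2 ^ (b i + b j) + (1 - 1 / 2 ^ (b i + b j)) * J) :
    variance (fun ω => ((∑ i, X i ω) - ∑ i, 1 / (2 : ℝ) ^ b i)
        / (∑ i, (1 - 1 / (2 : ℝ) ^ b i))) μ
      = ((∑ i, (1 / 2 ^ b i + (1 - 1 / 2 ^ b i) * J)
              * (1 - (1 / 2 ^ b i + (1 - 1 / (2 : ℝ) ^ b i) * J)))
          + ∑ i, ∑ j, if i ≠ j then
              (1 / 2 ^ (b i + b j) + (1 - 1 / 2 ^ (b i + b j)) * J)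
                - (1 / 2 ^ b i + (1 - 1 / 2 ^ b i) * J)
                  * (1 / 2 ^ b j + (1 - 1 / (2 : ℝ) ^ b j) * J)
            else 0)
        / (∑ i, (1 - 1 / (2 : ℝ) ^ b i)) ^ 2 := by
  have hL2 : ∀ i, MemLp (X i) 2 μ := fun i ↦ memLp_of_zero_or_one (hXmeas i) (hX01 i) 2
  have hsum : Measurable fun ω ↦ ∑ i, X i ω := Finset.measurable_fun_sum _ fun i _ ↦ hXmeas i
  rw [variance_sub_const_div hsum.aestronglyMeasurable, variance_fun_sum hL2,
    sum_sum_eq_sum_diag_add_sum_offDiag]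
  congr 2
  · refine sum_congr rfl fun i _ ↦ ?_
    rw [covariance_self (hXmeas i).aemeasurable, variance_of_zero_or_one (hXmeas i) (hX01 i),
      hXmean]
  · refine sum_congr rfl fun i _ ↦ sum_congr rfl fun j _ ↦ ?_
    split_ifs with hij
    · rw [covariance_eq_sub (hL2 i) (hL2 j), hXmean, hXmean, ← hXY i j hij]
      rfl
    · rfl

/-- Variance of the Pb-Hash estimator (Theorem 2): with `m` chunks of `b i` bits,
`c_b = 1/2^b`, `P_b = c_b + (1 − c_b)·J`, collision indicators `X i` with
`E[X i] = P_{b i}` and `E[X i · X j] = P_{b i + b j}` for `i ≠ j`, the estimator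
`Ĵ_m = (∑ X i − ∑ c_{b i})/(∑ (1 − c_{b i}))` has variance
`[∑ P_{b i}(1 − P_{b i}) + ∑_{i ≠ j} (P_{b i + b j} − P_{b i} P_{b j})] / (∑ (1 − c_{b i}))²`. -/
theorem pbHash_variance {Ω : Type*} [MeasurableSpace Ω]
    (μ : Measure Ω) [IsProbabilityMeasure μ]
    (J : ℝ) (hJ : J ∈ Set.Icc (0 : ℝ) 1) (m : ℕ) (hm : 1 ≤ m)
    (b : Fin m → ℕ) (hb : ∀ i, 1 ≤ b i)
    (X : Fin m → Ω → ℝ) (hXmeas : ∀ i, Measurable (X i))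
    (hX01 : ∀ i ω, X i ω = 0 ∨ X i ω = 1)
    (hXmean : ∀ i, ∫ ω, X i ω ∂μ = 1 / 2 ^ b i + (1 - 1 / 2 ^ b i) * J)
    (hXY : ∀ i j, i ≠ j →
      ∫ ω, X i ω * X j ω ∂μ = 1 / 2 ^ (b i + b j) + (1 - 1 / 2 ^ (b i + b j)) * J) :
    variance (fun ω => ((∑ i, X i ω) - ∑ i, 1 / (2 : ℝ) ^ b i)
        / (∑ i, (1 - 1 / (2 : ℝ) ^ b i))) μ
      = ((∑ i, (1 / 2 ^ b i + (1 - 1 / 2 ^ b i) * J)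
              * (1 - (1 / 2 ^ b i + (1 - 1 / (2 : ℝ) ^ b i) * J)))
          + ∑ i, ∑ j, if i ≠ j then
              (1 / 2 ^ (b i + b j) + (1 - 1 / 2 ^ (b i + b j)) * J)
                - (1 / 2 ^ b i + (1 - 1 / 2 ^ b i) * J)
                  * (1 / 2 ^ b j + (1 - 1 / (2 : ℝ) ^ b j) * J)
            else 0)
        / (∑ i, (1 - 1 / (2 : ℝ) ^ b i)) ^ 2 :=
  pbHash_variance_general μ J m b X hXmeas hX01 hXmean hXY
end

section
/- Let (Ω, μ) be a probability space, J ∈ [0, 1], and b₁, b₂ ≥ 1 integers. For an integer b ≥ 1 write c_b = 1/2^b and P_b = c_b + (1 − c_b)·J. Let X, Y : Ω → ℝ be random variables taking values in {0, 1} with E[X] = P_{b₁}, E[Y] = P_{b₂}, and E[X·Y] = P_{b₁+b₂}. Then Cov(X, Y) = P_{b₁+b₂} − P_{b₁}·P_{b₂}, and in particular Cov(X, Y) ≥ 0. -/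
/-!
Expanding the product gives `Cov(X, Y) = E[XY] - E[X] E[Y]`, which the hypotheses turn into
`P_{b₁+b₂} - P_{b₁} P_{b₂}`. Writing `P_b = 1 - (1 - c_b)(1 - J)` and using `c_{b₁+b₂} = c_{b₁} c_{b₂}`,
this difference factors as `(1 - c_{b₁})(1 - c_{b₂}) J (1 - J)`, a product of nonnegative terms.
-/

open MeasureTheory ProbabilityTheory

lemma memLp_of_forall_eq_zero_or_eq_one {Ω : Type*} [MeasurableSpace Ω] {μ : Measure Ω}
    [IsFiniteMeasure μ] {X : Ω → ℝ} (hX : Measurable X) (h01 : ∀ ω, X ω = 0 ∨ X ω = 1)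
    (p : ENNReal) : MemLp X p μ :=
  memLp_of_bounded (a := 0) (b := 1)
    (Filter.Eventually.of_forall fun ω => by rcases h01 ω with h | h <;> simp [h])
    hX.aestronglyMeasurable p

namespace MinHash

noncomputable def collisionProb (J : ℝ) (b : ℕ) : ℝ :=
  1 / 2 ^ b + (1 - 1 / 2 ^ b) * J

lemma collisionProb_add_sub_mul (J : ℝ) (b₁ b₂ : ℕ) :
    collisionProb J (b₁ + b₂) - collisionProb J b₁ * collisionProb J b₂
      = (1 - 1 / 2 ^ b₁) * (1 - 1 / 2 ^ b₂) * (J * (1 - J)) := by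
  unfold collisionProb
  rw [pow_add, ← one_div_mul_one_div]
  ring

lemma collisionProb_mul_le_add {J : ℝ} (hJ : J ∈ Set.Icc (0 : ℝ) 1) (b₁ b₂ : ℕ) :
    collisionProb J b₁ * collisionProb J b₂ ≤ collisionProb J (b₁ + b₂) := by
  have hc : ∀ b : ℕ, 0 ≤ 1 - 1 / (2 : ℝ) ^ b := fun b =>
    sub_nonneg.2 <| (div_le_one (by positivity)).2 (one_le_pow₀ one_le_two)
  rw [← sub_nonneg, collisionProb_add_sub_mul]
  exact mul_nonneg (mul_nonneg (hc b₁) (hc b₂)) (mul_nonneg hJ.1 (sub_nonneg.2 hJ.2))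

end MinHash

open MinHash

theorem chunk_covariance_general {Ω : Type*} [MeasurableSpace Ω]
    (μ : Measure Ω) [IsProbabilityMeasure μ]
    (J : ℝ) (hJ : J ∈ Set.Icc (0 : ℝ) 1) (b₁ b₂ : ℕ)
    (X Y : Ω → ℝ) (hXmeas : Measurable X) (hYmeas : Measurable Y)
    (hX01 : ∀ ω, X ω = 0 ∨ X ω = 1) (hY01 : ∀ ω, Y ω = 0 ∨ Y ω = 1)
    (hXmean : ∫ ω, X ω ∂μ = 1 / 2 ^ b₁ + (1 - 1 / 2 ^ b₁) * J)
    (hYmean : ∫ ω, Y ω ∂μ = 1 / 2 ^ b₂ + (1 - 1 / 2 ^ b₂) * J)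
    (hXY : ∫ ω, X ω * Y ω ∂μ = 1 / 2 ^ (b₁ + b₂) + (1 - 1 / 2 ^ (b₁ + b₂)) * J) :
    (∫ ω, (X ω - ∫ x, X x ∂μ) * (Y ω - ∫ x, Y x ∂μ) ∂μ
        = (1 / 2 ^ (b₁ + b₂) + (1 - 1 / 2 ^ (b₁ + b₂)) * J)
            - (1 / 2 ^ b₁ + (1 - 1 / 2 ^ b₁) * J) * (1 / 2 ^ b₂ + (1 - 1 / 2 ^ b₂) * J)) ∧
    0 ≤ ∫ ω, (X ω - ∫ x, X x ∂μ) * (Y ω - ∫ x, Y x ∂μ) ∂μ := by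
  have hcov : cov[X, Y; μ]
      = collisionProb J (b₁ + b₂) - collisionProb J b₁ * collisionProb J b₂ := by
    rw [covariance_eq_sub (memLp_of_forall_eq_zero_or_eq_one hXmeas hX01 2)
      (memLp_of_forall_eq_zero_or_eq_one hYmeas hY01 2)]
    exact congr_arg₂ _ hXY (congr_arg₂ _ hXmean hYmean)
  exact ⟨hcov, (sub_nonneg.2 (collisionProb_mul_le_add hJ b₁ b₂)).trans_eq hcov.symm⟩

/-- Covariance of the collision indicators on two disjoint bit-chunks:
`Cov(X, Y) = P_{b₁+b₂} − P_{b₁}·P_{b₂} ≥ 0`, where `P_b = 1/2^b + (1 − 1/2^b)·J`,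
`E[X] = P_{b₁}`, `E[Y] = P_{b₂}` and `E[X·Y] = P_{b₁+b₂}`. -/
theorem chunk_covariance {Ω : Type*} [MeasurableSpace Ω]
    (μ : Measure Ω) [IsProbabilityMeasure μ]
    (J : ℝ) (hJ : J ∈ Set.Icc (0 : ℝ) 1) (b₁ b₂ : ℕ) (hb₁ : 1 ≤ b₁) (hb₂ : 1 ≤ b₂)
    (X Y : Ω → ℝ) (hXmeas : Measurable X) (hYmeas : Measurable Y)
    (hX01 : ∀ ω, X ω = 0 ∨ X ω = 1) (hY01 : ∀ ω, Y ω = 0 ∨ Y ω = 1)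
    (hXmean : ∫ ω, X ω ∂μ = 1 / 2 ^ b₁ + (1 - 1 / 2 ^ b₁) * J)
    (hYmean : ∫ ω, Y ω ∂μ = 1 / 2 ^ b₂ + (1 - 1 / 2 ^ b₂) * J)
    (hXY : ∫ ω, X ω * Y ω ∂μ = 1 / 2 ^ (b₁ + b₂) + (1 - 1 / 2 ^ (b₁ + b₂)) * J) :
    (∫ ω, (X ω - ∫ x, X x ∂μ) * (Y ω - ∫ x, Y x ∂μ) ∂μ
        = (1 / 2 ^ (b₁ + b₂) + (1 - 1 / 2 ^ (b₁ + b₂)) * J)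
            - (1 / 2 ^ b₁ + (1 - 1 / 2 ^ b₁) * J) * (1 / 2 ^ b₂ + (1 - 1 / 2 ^ b₂) * J)) ∧
    0 ≤ ∫ ω, (X ω - ∫ x, X x ∂μ) * (Y ω - ∫ x, Y x ∂μ) ∂μ :=
  chunk_covariance_general μ J hJ b₁ b₂ X Y hXmeas hYmeas hX01 hY01 hXmean hYmean hXY
end

section
/- Let (Ω, μ) be a probability space, J ∈ [0, 1], and m, b ≥ 1 integers. Write c_b = 1/2^b, P_b = c_b + (1 − c_b)·J, and P_{2b} = c_{2b} + (1 − c_{2b})·J with c_{2b} = 1/2^{2b}. Let X : Fin m → Ω → ℝ be random variables such that each X(i) takes values in {0, 1}, E[X(i)] = P_b for every i, and E[X(i)·X(j)] = P_{2b} for every i ≠ j. Define Ĵ_m = (∑_{i} X(i))/(m(1 − c_b)) − c_b/(1 − c_b). Then Var(Ĵ_m) = (1/m)·P_b(1 − P_b)/(1 − c_b)² + ((m − 1)/m)·(P_{2b} − P_b²)/(1 − c_b)². -/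
/-!
The estimator is an affine function of `S = ∑ i, X i`, so its variance is `Var S / (m (1 - c_b))²`.
Expanding `Var S` as the sum of all covariances gives `m` diagonal terms `P_b (1 - P_b)`
(an indicator satisfies `X² = X`) and `m (m - 1)` off-diagonal terms `P_{2b} - P_b²`.
-/

open MeasureTheory ProbabilityTheory

namespace ProbabilityTheory

variable {Ω : Type*} [MeasurableSpace Ω] {μ : Measure Ω}

lemma memLp_of_forall_eq_zero_or_eq_one [IsFiniteMeasure μ] {X : Ω → ℝ}
    (hX : AEStronglyMeasurable X μ) (h01 : ∀ ω, X ω = 0 ∨ X ω = 1) (p : ENNReal) :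
    MemLp X p μ :=
  MemLp.of_bound hX 1 <| ae_of_all _ fun ω ↦ by rcases h01 ω with h | h <;> simp [h]

lemma variance_of_forall_eq_zero_or_eq_one [IsProbabilityMeasure μ] {X : Ω → ℝ}
    (hX : AEStronglyMeasurable X μ) (h01 : ∀ ω, X ω = 0 ∨ X ω = 1) :
    Var[X; μ] = μ[X] * (1 - μ[X]) := by
  have hsq : X ^ 2 = X := funext fun ω ↦ by rcases h01 ω with h | h <;> simp [h]
  rw [variance_eq_sub (memLp_of_forall_eq_zero_or_eq_one hX h01 2), hsq]
  ring

lemma variance_fun_sum_of_covariance_eq [IsFiniteMeasure μ] {ι : Type*} [Fintype ι]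
    {X : ι → Ω → ℝ} (hX : ∀ i, MemLp (X i) 2 μ) {v w : ℝ} (hv : ∀ i, Var[X i; μ] = v)
    (hw : ∀ i j, i ≠ j → cov[X i, X j; μ] = w) :
    Var[fun ω ↦ ∑ i, X i ω; μ]
      = Fintype.card ι * v + Fintype.card ι * (Fintype.card ι - 1) * w := by
  classical
  have hcov : ∀ i j, cov[X i, X j; μ] = w + if i = j then v - w else 0 := by
    intro i j
    by_cases hij : i = j
    · subst hij
      rw [covariance_self (hX i).aemeasurable, hv]
      simp
    · simp [hw i j hij, hij]
  simp only [variance_fun_sum hX, hcov, Finset.sum_add_distrib, Finset.sum_ite_eq,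
    Finset.mem_univ, if_true, Finset.sum_const, Finset.card_univ, nsmul_eq_mul]
  ring

lemma variance_fun_div_sub_const [IsProbabilityMeasure μ] {Y : Ω → ℝ}
    (hY : AEStronglyMeasurable Y μ) (k d : ℝ) :
    Var[fun ω ↦ Y ω / k - d; μ] = Var[Y; μ] / k ^ 2 := by
  rw [variance_sub_const (by fun_prop)]
  simp_rw [div_eq_mul_inv, variance_mul_const, inv_pow]

end ProbabilityTheory

theorem pbHash_variance_equal_chunks_general {Ω : Type*} [MeasurableSpace Ω]
    (μ : Measure Ω) [IsProbabilityMeasure μ]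
    (J : ℝ) (m b : ℕ)
    (X : Fin m → Ω → ℝ) (hXmeas : ∀ i, Measurable (X i))
    (hX01 : ∀ i ω, X i ω = 0 ∨ X i ω = 1)
    (hXmean : ∀ i, ∫ ω, X i ω ∂μ = 1 / 2 ^ b + (1 - 1 / 2 ^ b) * J)
    (hXY : ∀ i j, i ≠ j →
      ∫ ω, X i ω * X j ω ∂μ = 1 / 2 ^ (2 * b) + (1 - 1 / 2 ^ (2 * b)) * J) :
    variance (fun ω => (∑ i, X i ω) / ((m : ℝ) * (1 - 1 / (2 : ℝ) ^ b))
        - (1 / (2 : ℝ) ^ b) / (1 - 1 / (2 : ℝ) ^ b)) μ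
      = (1 / (m : ℝ)) * ((1 / 2 ^ b + (1 - 1 / 2 ^ b) * J)
            * (1 - (1 / 2 ^ b + (1 - 1 / 2 ^ b) * J))) / (1 - 1 / (2 : ℝ) ^ b) ^ 2
        + (((m : ℝ) - 1) / (m : ℝ))
            * ((1 / 2 ^ (2 * b) + (1 - 1 / 2 ^ (2 * b)) * J)
                - (1 / 2 ^ b + (1 - 1 / 2 ^ b) * J) ^ 2) / (1 - 1 / (2 : ℝ) ^ b) ^ 2 := by
  generalize 1 / 2 ^ b + (1 - 1 / 2 ^ b) * J = P at hXmean ⊢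
  generalize 1 / 2 ^ (2 * b) + (1 - 1 / 2 ^ (2 * b)) * J = Q at hXY ⊢
  generalize 1 - 1 / (2 : ℝ) ^ b = e
  have hXm : ∀ i, AEStronglyMeasurable (X i) μ := fun i ↦ (hXmeas i).aestronglyMeasurable
  have hXLp : ∀ i, MemLp (X i) 2 μ := fun i ↦ memLp_of_forall_eq_zero_or_eq_one (hXm i) (hX01 i) 2
  have hvar : ∀ i, Var[X i; μ] = P * (1 - P) := fun i ↦ by
    rw [variance_of_forall_eq_zero_or_eq_one (hXm i) (hX01 i), hXmean]
  have hcov : ∀ i j, i ≠ j → cov[X i, X j; μ] = Q - P ^ 2 := fun i j hij ↦ by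
    rw [covariance_eq_sub (hXLp i) (hXLp j), Pi.mul_def, hXY i j hij, hXmean, hXmean, sq]
  rw [variance_fun_div_sub_const (Finset.aestronglyMeasurable_fun_sum _ fun i _ ↦ hXm i),
    variance_fun_sum_of_covariance_eq hXLp hvar hcov, Fintype.card_fin]
  rcases eq_or_ne (m : ℝ) 0 with hm | hm
  · simp [hm]
  · field_simp

/-- Equal-chunk specialization of Theorem 2: with `m` chunks of `b` bits each,
`c_b = 1/2^b`, `P_b = c_b + (1 − c_b)·J`, `P_{2b} = 1/2^{2b} + (1 − 1/2^{2b})·J`,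
collision indicators `X i` with `E[X i] = P_b` and `E[X i · X j] = P_{2b}` for `i ≠ j`,
the estimator `Ĵ_m = (∑ X i)/(m(1 − c_b)) − c_b/(1 − c_b)` has variance
`(1/m)·P_b(1 − P_b)/(1 − c_b)² + ((m − 1)/m)·(P_{2b} − P_b²)/(1 − c_b)²`. -/
theorem pbHash_variance_equal_chunks {Ω : Type*} [MeasurableSpace Ω]
    (μ : Measure Ω) [IsProbabilityMeasure μ]
    (J : ℝ) (hJ : J ∈ Set.Icc (0 : ℝ) 1) (m b : ℕ) (hm : 1 ≤ m) (hb : 1 ≤ b)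
    (X : Fin m → Ω → ℝ) (hXmeas : ∀ i, Measurable (X i))
    (hX01 : ∀ i ω, X i ω = 0 ∨ X i ω = 1)
    (hXmean : ∀ i, ∫ ω, X i ω ∂μ = 1 / 2 ^ b + (1 - 1 / 2 ^ b) * J)
    (hXY : ∀ i j, i ≠ j →
      ∫ ω, X i ω * X j ω ∂μ = 1 / 2 ^ (2 * b) + (1 - 1 / 2 ^ (2 * b)) * J) :
    variance (fun ω => (∑ i, X i ω) / ((m : ℝ) * (1 - 1 / (2 : ℝ) ^ b))
        - (1 / (2 : ℝ) ^ b) / (1 - 1 / (2 : ℝ) ^ b)) μ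
      = (1 / (m : ℝ)) * ((1 / 2 ^ b + (1 - 1 / 2 ^ b) * J)
            * (1 - (1 / 2 ^ b + (1 - 1 / 2 ^ b) * J))) / (1 - 1 / (2 : ℝ) ^ b) ^ 2
        + (((m : ℝ) - 1) / (m : ℝ))
            * ((1 / 2 ^ (2 * b) + (1 - 1 / 2 ^ (2 * b)) * J)
                - (1 / 2 ^ b + (1 - 1 / 2 ^ b) * J) ^ 2) / (1 - 1 / (2 : ℝ) ^ b) ^ 2 :=
  pbHash_variance_equal_chunks_general μ J m b X hXmeas hX01 hXmean hXY
end

section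
/- Let J ∈ [0, 1] and m, b ≥ 1 be integers. Write c_b = 1/2^b, P_b = c_b + (1 − c_b)·J, and P_{2b} = 1/2^{2b} + (1 − 1/2^{2b})·J. Then (1/m)·P_b(1 − P_b)/(1 − c_b)² + ((m − 1)/m)·(P_{2b} − P_b²)/(1 − c_b)² ≥ (1/m)·P_b(1 − P_b)/(1 − c_b)². -/
/-- Partitioning one hash into `m` chunks of `b` bits is never more accurate than
`m` independent `b`-bit hashes: with `c_b = 1/2^b`, `P_b = c_b + (1 − c_b)·J`,
`P_{2b} = 1/2^{2b} + (1 − 1/2^{2b})·J`, the Pb-Hash variance (LHS) dominates the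
independent-hash variance (RHS). -/
theorem pbHash_variance_ge_independent (J : ℝ) (hJ : J ∈ Set.Icc (0 : ℝ) 1)
    (m b : ℕ) (hm : 1 ≤ m) (hb : 1 ≤ b) :
    (1 / (m : ℝ)) * ((1 / 2 ^ b + (1 - 1 / 2 ^ b) * J)
          * (1 - (1 / 2 ^ b + (1 - 1 / 2 ^ b) * J))) / (1 - 1 / (2 : ℝ) ^ b) ^ 2
        + (((m : ℝ) - 1) / (m : ℝ))
          * ((1 / 2 ^ (2 * b) + (1 - 1 / 2 ^ (2 * b)) * J)
              - (1 / 2 ^ b + (1 - 1 / 2 ^ b) * J) ^ 2) / (1 - 1 / (2 : ℝ) ^ b) ^ 2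
      ≥ (1 / (m : ℝ)) * ((1 / 2 ^ b + (1 - 1 / 2 ^ b) * J)
          * (1 - (1 / 2 ^ b + (1 - 1 / 2 ^ b) * J))) / (1 - 1 / (2 : ℝ) ^ b) ^ 2 := by

  obtain ⟨hJ0, hJ1⟩ := hJ
  have hc : (0:ℝ) < 1 / 2 ^ b := by positivity
  have hc1 : 1 / (2:ℝ) ^ b ≤ 1 := by
    rw [div_le_one (by positivity)]
    exact one_le_pow₀ one_le_two
  have key : (1 / 2 ^ (2 * b) + (1 - 1 / 2 ^ (2 * b)) * J)
      - (1 / 2 ^ b + (1 - 1 / 2 ^ b) * J) ^ 2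
      = (1 - 1 / (2:ℝ) ^ b) ^ 2 * (J * (1 - J)) := by
    have h2 : (2:ℝ) ^ (2 * b) = (2 ^ b) ^ 2 := by
      rw [mul_comm, pow_mul]
    rw [h2]
    have hb0 : (2:ℝ) ^ b ≠ 0 := by positivity
    field_simp
    ring
  have ht : 0 ≤ (((m : ℝ) - 1) / (m : ℝ))
      * ((1 / 2 ^ (2 * b) + (1 - 1 / 2 ^ (2 * b)) * J)
          - (1 / 2 ^ b + (1 - 1 / 2 ^ b) * J) ^ 2) / (1 - 1 / (2 : ℝ) ^ b) ^ 2 := by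
    rw [key]
    have hm' : (0:ℝ) ≤ ((m:ℝ) - 1) / m := by
      apply div_nonneg _ (Nat.cast_nonneg m)
      have : (1:ℝ) ≤ m := by exact_mod_cast hm
      linarith
    apply div_nonneg _ (sq_nonneg _)
    exact mul_nonneg hm' (mul_nonneg (sq_nonneg _) (mul_nonneg hJ0 (by linarith)))
  linarith
end
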